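/- arXiv:2204.12990 — 15 statements merged into one kernel-verified Lean document; each statement's English description precedes it below -/
import Mathlib

section
/- Let a, b, c be positive real numbers and let C := (1/2)(ab/c + bc/a + ca/b). Then C² ≥ a² + b², C² ≥ b² + c², and C² ≥ c² + a²; consequently C > a, C > b, and C > c. -/
/-! With x = ab/c, y = bc/a, z = ca/b one has xy = b², yz = c², zx = a², and C = (x + y + z)/2.
Hence C² - (a² + b²) = ((x + y + z)/2)² - x(y + z) = ((y + z - x)/2)² ≥ 0, and cyclically.
Strictness follows since b > 0 and C > 0. -/

section

variable {K : Type*} [Field K]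

theorem div_mul_div_cyclic_eq_sq {a b c : K} (ha : a ≠ 0) (hc : c ≠ 0) :
    a * b / c * (b * c / a) = b ^ 2 := by
  field_simp

variable [LinearOrder K] [IsStrictOrderedRing K]

theorem mul_add_le_half_add_sq (x y z : K) : x * (y + z) ≤ ((1 / 2) * (x + y + z)) ^ 2 := by
  nlinarith [sq_nonneg (y + z - x)]

theorem sq_add_sq_le_half_cyclic_sum_sq {a b c : K} (ha : a ≠ 0) (hb : b ≠ 0) (hc : c ≠ 0) :
    a ^ 2 + b ^ 2 ≤ ((1 / 2) * (a * b / c + b * c / a + c * a / b)) ^ 2 := calc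
  a ^ 2 + b ^ 2 = a * b / c * (b * c / a + c * a / b) := by
    rw [mul_add, div_mul_div_cyclic_eq_sq ha hc, mul_comm, div_mul_div_cyclic_eq_sq hc hb]; ring
  _ ≤ _ := mul_add_le_half_add_sq _ _ _

theorem lt_of_sq_add_sq_le {a b C : K} (hb : 0 < b) (hC : 0 ≤ C) (h : a ^ 2 + b ^ 2 ≤ C ^ 2) :
    a < C :=
  (le_abs_self a).trans_lt (abs_lt_of_sq_lt_sq (by nlinarith) hC)

end

theorem dirac_sphere_C_bounds (a b c : ℝ) (ha : 0 < a) (hb : 0 < b) (hc : 0 < c)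
    (C : ℝ) (hC : C = (1/2) * (a*b/c + b*c/a + c*a/b)) :
    C^2 ≥ a^2 + b^2 ∧ C^2 ≥ b^2 + c^2 ∧ C^2 ≥ c^2 + a^2 ∧
      C > a ∧ C > b ∧ C > c := by
  have hab : a ^ 2 + b ^ 2 ≤ C ^ 2 := hC ▸ sq_add_sq_le_half_cyclic_sum_sq ha.ne' hb.ne' hc.ne'
  have hbc : b ^ 2 + c ^ 2 ≤ C ^ 2 := by
    rw [show C = (1/2) * (b*c/a + c*a/b + a*b/c) by rw [hC]; ring]
    exact sq_add_sq_le_half_cyclic_sum_sq hb.ne' hc.ne' ha.ne'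
  have hca : c ^ 2 + a ^ 2 ≤ C ^ 2 := by
    rw [show C = (1/2) * (c*a/b + a*b/c + b*c/a) by rw [hC]; ring]
    exact sq_add_sq_le_half_cyclic_sum_sq hc.ne' ha.ne' hb.ne'
  have hC0 : 0 ≤ C := by rw [hC]; positivity
  exact ⟨hab, hbc, hca, lt_of_sq_add_sq_le hb hC0 hab, lt_of_sq_add_sq_le hc hC0 hbc,
    lt_of_sq_add_sq_le ha hC0 hca⟩
end

section
/- Let a, b, c be positive real numbers and scal := 4(a² + b² + c²) − 2(a²b²/c² + b²c²/a² + c²a²/b²). Then scal > 0 if and only if the three inequalities ab < c(a+b), bc < a(b+c), and ca < b(c+a) hold simultaneously. -/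
theorem dirac_sphere_scal_pos_iff_triangle (a b c : ℝ) (ha : 0 < a) (hb : 0 < b) (hc : 0 < c)
    (scal : ℝ)
    (hscal : scal = 4*(a^2 + b^2 + c^2) - 2*(a^2*b^2/c^2 + b^2*c^2/a^2 + c^2*a^2/b^2)) :
    scal > 0 ↔ (a*b < c*(a+b) ∧ b*c < a*(b+c) ∧ c*a < b*(c+a)) := by
  have ha' := ha.ne'
  have hb' := hb.ne'
  have hc' := hc.ne'
  have habc : (0:ℝ) < a^2*b^2*c^2 := by positivity
  have key : scal * (a^2*b^2*c^2) =
      2*((a*b+b*c+c*a)*(b*c+c*a-a*b)*(c*a+a*b-b*c)*(a*b+b*c-c*a)) := by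
    subst hscal
    field_simp
    ring
  clear hscal
  have hsum : (0:ℝ) < a*b+b*c+c*a := by positivity
  have e1 : c*(a+b) = b*c+c*a := by ring
  have e2 : a*(b+c) = a*b+c*a := by ring
  have e3 : b*(c+a) = b*c+a*b := by ring
  constructor
  · intro hpos
    have hprod : 0 < (a*b+b*c+c*a)*(b*c+c*a-a*b)*(c*a+a*b-b*c)*(a*b+b*c-c*a) := by
      nlinarith [mul_pos hpos habc, key]
    refine ⟨?_, ?_, ?_⟩
    · by_contra h
      push_neg at h
      have t1 : b*c+c*a-a*b ≤ 0 := by linarith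
      have g2 : (0:ℝ) ≤ c*a+a*b-b*c := by linarith [mul_pos hc ha]
      have g3 : (0:ℝ) ≤ a*b+b*c-c*a := by linarith [mul_pos hb hc]
      have h4 : (a*b+b*c+c*a)*(b*c+c*a-a*b) ≤ 0 := mul_nonpos_of_nonneg_of_nonpos hsum.le t1
      have h5 := mul_nonpos_of_nonpos_of_nonneg h4 g2
      have h6 := mul_nonpos_of_nonpos_of_nonneg h5 g3
      linarith
    · by_contra h
      push_neg at h
      have t1 : c*a+a*b-b*c ≤ 0 := by linarith
      have g1 : (0:ℝ) ≤ b*c+c*a-a*b := by linarith [mul_pos hc ha]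
      have g3 : (0:ℝ) ≤ a*b+b*c-c*a := by linarith [mul_pos ha hb]
      have h4 : (0:ℝ) ≤ (a*b+b*c+c*a)*(b*c+c*a-a*b) := mul_nonneg hsum.le g1
      have h5 := mul_nonpos_of_nonneg_of_nonpos h4 t1
      have h6 := mul_nonpos_of_nonpos_of_nonneg h5 g3
      linarith
    · by_contra h
      push_neg at h
      have t1 : a*b+b*c-c*a ≤ 0 := by linarith
      have g1 : (0:ℝ) ≤ b*c+c*a-a*b := by linarith [mul_pos hb hc]
      have g2 : (0:ℝ) ≤ c*a+a*b-b*c := by linarith [mul_pos ha hb]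
      have h4 : (0:ℝ) ≤ (a*b+b*c+c*a)*(b*c+c*a-a*b) := mul_nonneg hsum.le g1
      have h5 : (0:ℝ) ≤ (a*b+b*c+c*a)*(b*c+c*a-a*b)*(c*a+a*b-b*c) := mul_nonneg h4 g2
      have h6 := mul_nonpos_of_nonneg_of_nonpos h5 t1
      linarith
  · rintro ⟨h1, h2, h3⟩
    have f1 : 0 < b*c+c*a-a*b := by linarith
    have f2 : 0 < c*a+a*b-b*c := by linarith
    have f3 : 0 < a*b+b*c-c*a := by linarith
    have hprod : 0 < (a*b+b*c+c*a)*(b*c+c*a-a*b)*(c*a+a*b-b*c)*(a*b+b*c-c*a) :=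
      mul_pos (mul_pos (mul_pos hsum f1) f2) f3
    have hsa : 0 < scal * (a^2*b^2*c^2) := by linarith
    by_contra hneg
    push_neg at hneg
    have := mul_nonpos_of_nonpos_of_nonneg hneg habc.le
    linarith
end

section
/- Let a, b, c be positive real numbers, C := (1/2)(ab/c + bc/a + ca/b), and scal := 4(a² + b² + c²) − 2(a²b²/c² + b²c²/a² + c²a²/b²). Then scal > 0 if and only if C < a + bc/a, C < b + ca/b, and C < c + ab/c all hold. -/
private lemma aux_scal (a b c x y z : ℝ) (ha : 0 < a) (hb : 0 < b) (hc : 0 < c)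
    (hxp : 0 < x) (hyp : 0 < y) (hzp : 0 < z)
    (hxz : x * z = a^2) (hxy : x * y = b^2) (hyz : y * z = c^2) :
    4*(x*y + y*z + z*x) - 2*(x^2 + y^2 + z^2) > 0 ↔
      ((x + y + z) / 2 < a + y ∧ (x + y + z) / 2 < b + z ∧ (x + y + z) / 2 < c + x) := by
  constructor
  · intro h
    have k1 : (x + z - y)^2 < (2*a)^2 := by nlinarith
    have k2 : (x + y - z)^2 < (2*b)^2 := by nlinarith
    have k3 : (y + z - x)^2 < (2*c)^2 := by nlinarith
    refine ⟨by nlinarith [k1], by nlinarith [k2], by nlinarith [k3]⟩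
  · rintro ⟨h1, h2, h3⟩
    rcases lt_or_ge 0 (x + z - y) with h | h
    · nlinarith [mul_pos (show 0 < 2*a - (x+z-y) by linarith) (show 0 < 2*a + (x+z-y) by linarith)]
    · have h4 : 0 < x + y - z := by linarith
      nlinarith [mul_pos (show 0 < 2*b - (x+y-z) by linarith) (show 0 < 2*b + (x+y-z) by linarith)]

theorem dirac_sphere_scal_pos_iff_C_lt (a b c : ℝ) (ha : 0 < a) (hb : 0 < b) (hc : 0 < c)
    (C scal : ℝ) (hC : C = (1/2) * (a*b/c + b*c/a + c*a/b))
    (hscal : scal = 4*(a^2 + b^2 + c^2) - 2*(a^2*b^2/c^2 + b^2*c^2/a^2 + c^2*a^2/b^2)) :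
    scal > 0 ↔ (C < a + b*c/a ∧ C < b + c*a/b ∧ C < c + a*b/c) := by
  have key := aux_scal a b c (a*b/c) (b*c/a) (c*a/b) ha hb hc
    (by positivity) (by positivity) (by positivity)
    (by field_simp) (by field_simp) (by field_simp)
  have e1 : scal = 4*((a*b/c)*(b*c/a) + (b*c/a)*(c*a/b) + (c*a/b)*(a*b/c))
      - 2*((a*b/c)^2 + (b*c/a)^2 + (c*a/b)^2) := by
    rw [hscal]; field_simp; ring
  have e2 : C = (a*b/c + b*c/a + c*a/b) / 2 := by rw [hC]; ring
  rw [e1, e2]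
  exact key
end

section
/- Let a, b, c be positive real numbers with scal > 0, where scal := 4(a² + b² + c²) − 2(a²b²/c² + b²c²/a² + c²a²/b²), and let C := (1/2)(ab/c + bc/a + ca/b). Then for every real x with 0 ≤ x ≤ 2C one has x³ − 4(a² + b² + c²)x − 16abc < 0. -/
theorem dirac_sphere_chi2_neg (a b c : ℝ) (ha : 0 < a) (hb : 0 < b) (hc : 0 < c)
    (C scal : ℝ) (hC : C = (1/2) * (a*b/c + b*c/a + c*a/b))
    (hscal : scal = 4*(a^2 + b^2 + c^2) - 2*(a^2*b^2/c^2 + b^2*c^2/a^2 + c^2*a^2/b^2))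
    (hpos : scal > 0) :
    ∀ x : ℝ, 0 ≤ x → x ≤ 2*C →
      x^3 - 4*(a^2 + b^2 + c^2)*x - 16*a*b*c < 0 := by
  intro x hx0 hx2C
  have ha' := ha.ne'
  have hb' := hb.ne'
  have hc' := hc.ne'
  set u := a*b/c with hud
  set v := b*c/a with hvd
  set w := c*a/b with hwd
  have hu : (0:ℝ) < u := by rw [hud]; positivity
  have hv : (0:ℝ) < v := by rw [hvd]; positivity
  have hw : (0:ℝ) < w := by rw [hwd]; positivity
  have hsum : u*v + v*w + w*u = a^2 + b^2 + c^2 := by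
    rw [hud, hvd, hwd]; field_simp; ring
  have hsq : u^2 + v^2 + w^2 = a^2*b^2/c^2 + b^2*c^2/a^2 + c^2*a^2/b^2 := by
    rw [hud, hvd, hwd]; field_simp
  have hprod : u*v*w = a*b*c := by
    rw [hud, hvd, hwd]; field_simp
  have hxc : x ≤ u + v + w := by
    rw [hC] at hx2C; linarith
  have hcond : u^2 + v^2 + w^2 < 2*(u*v + v*w + w*u) := by
    rw [hscal, ← hsum, ← hsq] at hpos; linarith
  have h16 : 16*a*b*c = 16*(u*v*w) := by rw [hprod]; ring
  rw [← hsum, h16]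
  have hx3 : x^3 ≤ x * (u + v + w)^2 := by
    nlinarith [mul_nonneg (mul_nonneg hx0 (sub_nonneg.mpr hxc)) (by linarith : (0:ℝ) ≤ x + (u + v + w))]
  have hP : 0 ≤ x * (2*(u*v + v*w + w*u) - (u^2 + v^2 + w^2)) :=
    mul_nonneg hx0 (by linarith)
  have hring : x*(u + v + w)^2 - 4*(u*v + v*w + w*u)*x
      = -(x * (2*(u*v + v*w + w*u) - (u^2 + v^2 + w^2))) := by ring
  have hQ : 0 < u*v*w := mul_pos (mul_pos hu hv) hw
  linarith
end

section
/- Let a, b, c be positive real numbers with scal > 0, where scal := 4(a² + b² + c²) − 2(a²b²/c² + b²c²/a² + c²a²/b²), and let C := (1/2)(ab/c + bc/a + ca/b). Then for every real x with 0 ≤ x ≤ 2C one has x⁵ − 20(a² + b² + c²)x³ − 80abc·x² + 64(a⁴ + b⁴ + c⁴ + 4a²b² + 4b²c² + 4c²a²)x + 768abc(a² + b² + c²) > 0. -/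
theorem dirac_sphere_chi4_pos (a b c : ℝ) (ha : 0 < a) (hb : 0 < b) (hc : 0 < c)
    (C scal : ℝ) (hC : C = (1/2) * (a*b/c + b*c/a + c*a/b))
    (hscal : scal = 4*(a^2 + b^2 + c^2) - 2*(a^2*b^2/c^2 + b^2*c^2/a^2 + c^2*a^2/b^2))
    (hpos : scal > 0) :
    ∀ x : ℝ, 0 ≤ x → x ≤ 2*C →
      x^5 - 20*(a^2 + b^2 + c^2)*x^3 - 80*a*b*c*x^2
        + 64*(a^4 + b^4 + c^4 + 4*a^2*b^2 + 4*b^2*c^2 + 4*c^2*a^2)*x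
        + 768*a*b*c*(a^2 + b^2 + c^2) > 0 := by
  intro x hx0 hx2C
  have ha' := ha.ne'
  have hb' := hb.ne'
  have hc' := hc.ne'
  have hC2 : 4*C^2 = 4*(a^2 + b^2 + c^2) - scal/2 := by
    subst hC hscal
    field_simp
    ring
  have hCpos : 0 < C := by
    have : 0 < (1/2) * (a*b/c + b*c/a + c*a/b) := by positivity
    rwa [hC]
  have hxsq : x^2 ≤ 4*C^2 := by nlinarith
  have hs : x^2 < 4*(a^2 + b^2 + c^2) := by linarith
  have t1 : 0 ≤ x * (4*(a^2+b^2+c^2) - x^2) * (16*(a^2+b^2+c^2) - x^2) := by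
    apply mul_nonneg
    · apply mul_nonneg hx0
      linarith
    · nlinarith [sq_nonneg a, sq_nonneg b, sq_nonneg c]
  have t2 : 0 ≤ 128 * (a^2*b^2 + b^2*c^2 + c^2*a^2) * x := by positivity
  have t3 : 0 < 80 * (a*b*c) * ((48/5)*(a^2+b^2+c^2) - x^2) := by
    apply mul_pos (by positivity)
    nlinarith [sq_nonneg a, sq_nonneg b, sq_nonneg c]
  nlinarith [t1, t2, t3]
end

section
/- Let a, b, c be positive real numbers with scal > 0, where scal := 4(a² + b² + c²) − 2(a²b²/c² + b²c²/a² + c²a²/b²), and let C := (1/2)(ab/c + bc/a + ca/b). Then none of the eight real numbers a+b−c ± 2√(a²+b²+c²−ab+bc+ca), a−b+c ± 2√(a²+b²+c²+ab+bc−ca), −a−b−c ± 2√(a²+b²+c²−ab−bc−ca), −a+b+c ± 2√(a²+b²+c²+ab−bc+ca) lies in the closed interval [2C−(a+b+c), a+b+c]. -/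
/-- Schur-type inequality used for the `-a-b-c` eigenvalues. -/
lemma schurB_aux (x y z : ℝ) (hx : 0 < x) (hy : 0 < y) (hz : 0 < z) :
    4*(x^2*y^2 + y^2*z^2 + z^2*x^2) <
      (x^2 + y^2 + z^2)^2 + 4*(x*y*z)*(x + y + z) := by
  rcases le_or_gt (2*z^2) ((x+y)^2) with h | h
  · nlinarith [mul_nonneg (sq_nonneg (x-y)) (by linarith : (0:ℝ) ≤ (x+y)^2 - 2*z^2),
      mul_pos (mul_pos (mul_pos hx hy) hz) (add_pos hx hy), pow_pos hz 4]
  · nlinarith [mul_nonneg (by nlinarith [mul_pos hx hy] : (0:ℝ) ≤ (x+y)^2 - (x-y)^2)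
        (by linarith : (0:ℝ) ≤ 2*z^2 - (x+y)^2),
      sq_nonneg ((x+y)^2 - z^2),
      mul_pos (mul_pos (mul_pos hx hy) hz) (add_pos hx hy)]

/-- The key bound for the "minus" eigenvalues. -/
lemma minus_aux (a b c C Q : ℝ) (ha : 0 < a) (hb : 0 < b) (hc : 0 < c)
    (hQ : Q = a^2 + b^2 + c^2 - a*b + b*c + c*a)
    (hCge : a + b + c ≤ 2*C) :
    a + b - C < Real.sqrt Q := by
  have hQpos : 0 < Q := by rw [hQ]; nlinarith [sq_nonneg (a-b), mul_pos hb hc, mul_pos hc ha]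
  rcases le_or_gt (a+b) C with h | h
  · have := Real.sqrt_pos.mpr hQpos
    linarith
  · have h1 : (a + b - C)^2 < Q := by
      have hu : (0:ℝ) < a + b - C := by linarith
      have hD : a + b - C ≤ (a + b - c)/2 := by linarith
      rw [hQ]
      nlinarith [mul_le_mul hD hD hu.le (by linarith), sq_nonneg (a-b),
        mul_pos hc (add_pos ha hb), sq_nonneg c]
    calc a + b - C ≤ |a + b - C| := le_abs_self _
      _ = Real.sqrt ((a + b - C)^2) := (Real.sqrt_sq_eq_abs _).symm
      _ < Real.sqrt Q := Real.sqrt_lt_sqrt (sq_nonneg _) h1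

/-- The key bound for the "plus" eigenvalues. -/
lemma plus_aux (a b c Q : ℝ) (ha : 0 < a) (hb : 0 < b) (hc : 0 < c)
    (hQ : Q = a^2 + b^2 + c^2 - a*b + b*c + c*a) :
    c < Real.sqrt Q := by
  rw [Real.lt_sqrt hc.le, hQ]
  nlinarith [sq_nonneg (a-b), mul_pos hb hc, mul_pos hc ha]

theorem dirac_sphere_D3_eigenvalues_avoid_interval (a b c : ℝ)
    (ha : 0 < a) (hb : 0 < b) (hc : 0 < c)
    (C scal : ℝ) (hC : C = (1/2) * (a*b/c + b*c/a + c*a/b))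
    (hscal : scal = 4*(a^2 + b^2 + c^2) - 2*(a^2*b^2/c^2 + b^2*c^2/a^2 + c^2*a^2/b^2))
    (hpos : scal > 0) :
    a + b - c + 2*Real.sqrt (a^2+b^2+c^2-a*b+b*c+c*a) ∉ Set.Icc (2*C - (a+b+c)) (a+b+c) ∧
    a + b - c - 2*Real.sqrt (a^2+b^2+c^2-a*b+b*c+c*a) ∉ Set.Icc (2*C - (a+b+c)) (a+b+c) ∧
    a - b + c + 2*Real.sqrt (a^2+b^2+c^2+a*b+b*c-c*a) ∉ Set.Icc (2*C - (a+b+c)) (a+b+c) ∧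
    a - b + c - 2*Real.sqrt (a^2+b^2+c^2+a*b+b*c-c*a) ∉ Set.Icc (2*C - (a+b+c)) (a+b+c) ∧
    -a - b - c + 2*Real.sqrt (a^2+b^2+c^2-a*b-b*c-c*a) ∉ Set.Icc (2*C - (a+b+c)) (a+b+c) ∧
    -a - b - c - 2*Real.sqrt (a^2+b^2+c^2-a*b-b*c-c*a) ∉ Set.Icc (2*C - (a+b+c)) (a+b+c) ∧
    -a + b + c + 2*Real.sqrt (a^2+b^2+c^2+a*b-b*c+c*a) ∉ Set.Icc (2*C - (a+b+c)) (a+b+c) ∧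
    -a + b + c - 2*Real.sqrt (a^2+b^2+c^2+a*b-b*c+c*a) ∉ Set.Icc (2*C - (a+b+c)) (a+b+c) := by
  have habc : 0 < a*b*c := mul_pos (mul_pos ha hb) hc
  have hCe : 2*C*(a*b*c) = a^2*b^2 + b^2*c^2 + c^2*a^2 := by
    rw [hC]; field_simp
  have hCge : a + b + c ≤ 2*C := by
    nlinarith [hCe, sq_nonneg (a*b - b*c), sq_nonneg (b*c - c*a), sq_nonneg (a*b - c*a), habc]
  have hCpos : 0 < C := by nlinarith
  -- the three minus-type bounds
  have hm1 : a + b - C < Real.sqrt (a^2+b^2+c^2-a*b+b*c+c*a) :=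
    minus_aux a b c C _ ha hb hc (by ring) hCge
  have hm3 : a + c - C < Real.sqrt (a^2+b^2+c^2+a*b+b*c-c*a) :=
    minus_aux a c b C _ ha hc hb (by ring) (by linarith)
  have hm7 : c + b - C < Real.sqrt (a^2+b^2+c^2+a*b-b*c+c*a) :=
    minus_aux c b a C _ hc hb ha (by ring) (by linarith)
  -- the three plus-type bounds
  have hp1 : c < Real.sqrt (a^2+b^2+c^2-a*b+b*c+c*a) :=
    plus_aux a b c _ ha hb hc (by ring)
  have hp3 : b < Real.sqrt (a^2+b^2+c^2+a*b+b*c-c*a) :=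
    plus_aux a c b _ ha hc hb (by ring)
  have hp7 : a < Real.sqrt (a^2+b^2+c^2+a*b-b*c+c*a) :=
    plus_aux c b a _ hc hb ha (by ring)
  -- the bound for case 5/6
  have hCsq : 4*C^2*(a^2*b^2*c^2) = (a^2*b^2 + b^2*c^2 + c^2*a^2)^2 := by
    linear_combination (2*C*(a*b*c) + (a^2*b^2 + b^2*c^2 + c^2*a^2)) * hCe
  have hschur := schurB_aux (a*b) (b*c) (c*a) (mul_pos ha hb) (mul_pos hb hc) (mul_pos hc ha)
  have hQ5 : a^2+b^2+c^2-a*b-b*c-c*a < C^2 := by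
    nlinarith [hCsq, hschur, mul_pos (mul_pos (mul_pos ha ha) (mul_pos hb hb)) (mul_pos hc hc)]
  have hm5 : Real.sqrt (a^2+b^2+c^2-a*b-b*c-c*a) < C := (Real.sqrt_lt' hCpos).mpr hQ5
  have hs5 : 0 ≤ Real.sqrt (a^2+b^2+c^2-a*b-b*c-c*a) := Real.sqrt_nonneg _
  refine ⟨fun h => ?_, fun h => ?_, fun h => ?_, fun h => ?_, fun h => ?_, fun h => ?_,
    fun h => ?_, fun h => ?_⟩
  · have := h.2; linarith
  · have := h.1; linarith
  · have := h.2; linarith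
  · have := h.1; linarith
  · have := h.1; linarith
  · have := h.1; linarith
  · have := h.2; linarith
  · have := h.1; linarith
end

section
/- Let a, b, c be real numbers. Let A be the real 4×4 matrix with rows [3a, 3(b+c), 0, 0], [b+c, −a, 2(c−b), 0], [0, 2(c−b), −a, 3(b+c)], [0, 0, b+c, 3a], and let B be the matrix obtained from A by replacing a by −a and b by −b. Then the characteristic polynomial of A equals (x − λ₁)(x − λ₂)(x − λ₃)(x − λ₄) with λ₁,₂ = a+b−c ± 2√(a²+b²+c²−ab+bc+ca) and λ₃,₄ = a−b+c ± 2√(a²+b²+c²+ab+bc−ca), provided these radicands are nonnegative; and the characteristic polynomial of B equals (x − ν₁)(x − ν₂)(x − ν₃)(x − ν₄) with ν₁,₂ = −a−b−c ± 2√(a²+b²+c²−ab−bc−ca) and ν₃,₄ = −a+b+c ± 2√(a²+b²+c²+ab−bc+ca), provided these radicands are nonnegative. -/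
open Polynomial Matrix

lemma key (a b c : ℝ)
    (h1 : 0 ≤ a^2+b^2+c^2-a*b+b*c+c*a) (h2 : 0 ≤ a^2+b^2+c^2+a*b+b*c-c*a) :
    (!![3*a, 3*(b+c), 0, 0;
        b+c, -a, 2*(c-b), 0;
        0, 2*(c-b), -a, 3*(b+c);
        0, 0, b+c, 3*a] : Matrix (Fin 4) (Fin 4) ℝ).charpoly =
      (X - C (a+b-c + 2*Real.sqrt (a^2+b^2+c^2-a*b+b*c+c*a))) *
      (X - C (a+b-c - 2*Real.sqrt (a^2+b^2+c^2-a*b+b*c+c*a))) *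
      (X - C (a-b+c + 2*Real.sqrt (a^2+b^2+c^2+a*b+b*c-c*a))) *
      (X - C (a-b+c - 2*Real.sqrt (a^2+b^2+c^2+a*b+b*c-c*a))) := by
  set s := Real.sqrt (a^2+b^2+c^2-a*b+b*c+c*a) with hs
  set t := Real.sqrt (a^2+b^2+c^2+a*b+b*c-c*a) with ht
  have hs2 : s^2 = a^2+b^2+c^2-a*b+b*c+c*a := Real.sq_sqrt h1
  have ht2 : t^2 = a^2+b^2+c^2+a*b+b*c-c*a := Real.sq_sqrt h2
  have hcm : charmatrix (!![3*a, 3*(b+c), 0, 0;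
        b+c, -a, 2*(c-b), 0;
        0, 2*(c-b), -a, 3*(b+c);
        0, 0, b+c, 3*a] : Matrix (Fin 4) (Fin 4) ℝ) =
      !![X - C (3*a), -C (3*(b+c)), 0, 0;
         -C (b+c), X + C a, -C (2*(c-b)), 0;
         0, -C (2*(c-b)), X + C a, -C (3*(b+c));
         0, 0, -C (b+c), X - C (3*a)] := by
    apply Matrix.ext; intro i j
    fin_cases i <;> fin_cases j <;>
      simp [charmatrix_apply, Matrix.diagonal_apply, Matrix.vecHead, Matrix.vecTail]
  rw [Matrix.charpoly, hcm]
  have hdet : (!![X - C (3*a), -C (3*(b+c)), 0, 0;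
         -C (b+c), X + C a, -C (2*(c-b)), 0;
         0, -C (2*(c-b)), X + C a, -C (3*(b+c));
         0, 0, -C (b+c), X - C (3*a)] : Matrix (Fin 4) (Fin 4) ℝ[X]).det =
      ((X - C (3*a)) * (X + C a) - C (3*(b+c)) * C (b+c)) *
        ((X + C a) * (X - C (3*a)) - C (3*(b+c)) * C (b+c))
      - (X - C (3*a)) * (C (2*(c-b)))^2 * (X - C (3*a)) := by
    simp [Matrix.det_succ_row_zero, Fin.sum_univ_succ, Matrix.submatrix_apply,
      Fin.succAbove, Matrix.cons_val_zero, Matrix.cons_val_one]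
    ring
  rw [hdet]
  have hsC : (C s : ℝ[X])^2 =
      C a^2 + C b^2 + C c^2 - C a * C b + C b * C c + C c * C a := by
    rw [← C_pow, hs2]; simp only [C_add, C_sub, C_mul, C_pow]
  have htC : (C t : ℝ[X])^2 =
      C a^2 + C b^2 + C c^2 + C a * C b + C b * C c - C c * C a := by
    rw [← C_pow, ht2]; simp only [C_add, C_sub, C_mul, C_pow]
  simp only [C_add, C_sub, C_mul, C_pow, map_neg, map_ofNat]
  linear_combination (4*(X^2 - 2*(C a - C b + C c)*X + (C a - C b + C c)^2 - 4*(C t)^2)) * hsC +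
    (4*(X^2 - 2*(C a + C b - C c)*X + (C a + C b - C c)^2
      - 4*(C a^2 + C b^2 + C c^2 - C a * C b + C b * C c + C c * C a))) * htC

theorem dirac_sphere_D3prime_charpoly (a b c : ℝ)
    (A B : Matrix (Fin 4) (Fin 4) ℝ)
    (hA : A = !![3*a, 3*(b+c), 0, 0;
                 b+c, -a, 2*(c-b), 0;
                 0, 2*(c-b), -a, 3*(b+c);
                 0, 0, b+c, 3*a])
    (hB : B = !![3*(-a), 3*((-b)+c), 0, 0;
                 (-b)+c, -(-a), 2*(c-(-b)), 0;
                 0, 2*(c-(-b)), -(-a), 3*((-b)+c);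
                 0, 0, (-b)+c, 3*(-a)]) :
    (0 ≤ a^2+b^2+c^2-a*b+b*c+c*a → 0 ≤ a^2+b^2+c^2+a*b+b*c-c*a →
      A.charpoly =
        (Polynomial.X - Polynomial.C (a+b-c + 2*Real.sqrt (a^2+b^2+c^2-a*b+b*c+c*a))) *
        (Polynomial.X - Polynomial.C (a+b-c - 2*Real.sqrt (a^2+b^2+c^2-a*b+b*c+c*a))) *
        (Polynomial.X - Polynomial.C (a-b+c + 2*Real.sqrt (a^2+b^2+c^2+a*b+b*c-c*a))) *
        (Polynomial.X - Polynomial.C (a-b+c - 2*Real.sqrt (a^2+b^2+c^2+a*b+b*c-c*a)))) ∧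
    (0 ≤ a^2+b^2+c^2-a*b-b*c-c*a → 0 ≤ a^2+b^2+c^2+a*b-b*c+c*a →
      B.charpoly =
        (Polynomial.X - Polynomial.C (-a-b-c + 2*Real.sqrt (a^2+b^2+c^2-a*b-b*c-c*a))) *
        (Polynomial.X - Polynomial.C (-a-b-c - 2*Real.sqrt (a^2+b^2+c^2-a*b-b*c-c*a))) *
        (Polynomial.X - Polynomial.C (-a+b+c + 2*Real.sqrt (a^2+b^2+c^2+a*b-b*c+c*a))) *
        (Polynomial.X - Polynomial.C (-a+b+c - 2*Real.sqrt (a^2+b^2+c^2+a*b-b*c+c*a)))) := by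
  constructor
  · intro h1 h2
    rw [hA]
    exact key a b c h1 h2
  · intro h1 h2
    have e1 : (-a)^2+(-b)^2+c^2-(-a)*(-b)+(-b)*c+c*(-a) = a^2+b^2+c^2-a*b-b*c-c*a := by ring
    have e2 : (-a)^2+(-b)^2+c^2+(-a)*(-b)+(-b)*c-c*(-a) = a^2+b^2+c^2+a*b-b*c+c*a := by ring
    have hk := key (-a) (-b) c (by rw [e1]; exact h1) (by rw [e2]; exact h2)
    rw [e1, e2, show (-a + -b - c : ℝ) = -a-b-c from by ring,
      show (-a - -b + c : ℝ) = -a+b+c from by ring] at hk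
    rw [hB]
    exact hk
end

section
/- Let a, b, c be positive real numbers with scal > 0, where scal := 4(a² + b² + c²) − 2(a²b²/c² + b²c²/a² + c²a²/b²). Then for all integers n ≥ 0 and 0 ≤ k ≤ n one has G(n+2, k+1) > G(n, k). -/
/-- `C = (1/2)(ab/c + bc/a + ca/b)`. -/
noncomputable def diracC (a b c : ℝ) : ℝ := (1/2) * (a*b/c + b*c/a + c*a/b)

/-- The left endpoint `G(n,k)` of the `k`-th Gershgorin interval of `𝒜ₙ²` (for `b ≥ c`, `k` even). -/
noncomputable def diracG (a b c : ℝ) (n k : ℕ) : ℝ :=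
  (a*((n : ℝ) - 2*(k : ℝ)) - diracC a b c)^2
    + (b - c)^2 * (k : ℝ) * ((n : ℝ) - (k : ℝ) + 1)
    + (b + c)^2 * ((n : ℝ) - (k : ℝ)) * ((k : ℝ) + 1)
    - 2*(b - c)*(diracC a b c + a)*(k : ℝ)
    - 2*(b + c)*(diracC a b c - a)*((n : ℝ) - (k : ℝ))
    - (b^2 - c^2)*((k : ℝ)*((k : ℝ) - 1) + ((n : ℝ) - (k : ℝ))*((n : ℝ) - (k : ℝ) - 1))

lemma dirac_key (a b c : ℝ) (ha : 0 < a) (hb : 0 < b) (hc : 0 < c)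
    (hpos : 0 < 4*(a^2 + b^2 + c^2) - 2*(a^2*b^2/c^2 + b^2*c^2/a^2 + c^2*a^2/b^2))
    (N : ℝ) (hN : 0 ≤ N) :
    0 < 4*N*c^2 + 4*b^2 + 4*c^2 + 2*a*c - 2*a*b^2/c - 2*b^2*c/a := by
  have ha' := ha.ne'
  have hb' := hb.ne'
  have hc' := hc.ne'
  have hP : 0 < (a*b + b*c + c*a) * (b*c + c*a - a*b) * (c*a + a*b - b*c) * (a*b + b*c - c*a) := by
    have h : 0 < 2*(a^2 + b^2 + c^2) - (a^2*b^2/c^2 + b^2*c^2/a^2 + c^2*a^2/b^2) := by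
      linarith
    have hE : (a*b + b*c + c*a) * (b*c + c*a - a*b) * (c*a + a*b - b*c) * (a*b + b*c - c*a)
        = (a^2*b^2*c^2) * (2*(a^2 + b^2 + c^2) - (a^2*b^2/c^2 + b^2*c^2/a^2 + c^2*a^2/b^2)) := by
      field_simp
      ring
    rw [hE]
    positivity
  have hs12 : 0 < (b*c + c*a - a*b) + (c*a + a*b - b*c) := by nlinarith
  have hs13 : 0 < (b*c + c*a - a*b) + (a*b + b*c - c*a) := by nlinarith
  have hs23 : 0 < (c*a + a*b - b*c) + (a*b + b*c - c*a) := by nlinarith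
  have hS : 0 < a*b + b*c + c*a := by positivity
  -- each factor is positive
  have h2 : 0 < c*a + a*b - b*c := by
    by_contra h
    push_neg at h
    have h1 : 0 < b*c + c*a - a*b := by linarith
    have h3 : 0 < a*b + b*c - c*a := by linarith
    nlinarith [mul_pos h1 h3, mul_pos hS (mul_pos h1 h3)]
  have h1 : 0 < b*c + c*a - a*b := by
    by_contra h
    push_neg at h
    have h3 : 0 < a*b + b*c - c*a := by linarith
    nlinarith [mul_pos h2 h3, mul_pos hS (mul_pos h2 h3)]
  -- clear denominators: multiply goal by a*c/2
  rw [← sub_pos]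
  have hE : 4*N*c^2 + 4*b^2 + 4*c^2 + 2*a*c - 2*a*b^2/c - 2*b^2*c/a - 0
      = (2/(a*c)) * ((2*N*a*c^3 + 2*a*b^2*c + 2*a*c^3 + a^2*c^2 - a^2*b^2 - b^2*c^2) - 0) := by
    field_simp
    ring
  rw [hE]
  have hcore : 0 < 2*N*a*c^3 + 2*a*b^2*c + 2*a*c^3 + a^2*c^2 - a^2*b^2 - b^2*c^2 := by
    nlinarith [mul_pos h1 h2, mul_pos (mul_pos ha hb) (mul_pos h1 h2),
      mul_nonneg (mul_nonneg hN ha.le) (pow_pos hc 3).le, mul_pos ha hc,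
      mul_pos (mul_pos hb hc) (mul_pos hc ha)]
  have : 0 < 2/(a*c) := by positivity
  nlinarith [mul_pos this hcore]

theorem dirac_sphere_triangle_induction (a b c : ℝ) (ha : 0 < a) (hb : 0 < b) (hc : 0 < c)
    (scal : ℝ)
    (hscal : scal = 4*(a^2 + b^2 + c^2) - 2*(a^2*b^2/c^2 + b^2*c^2/a^2 + c^2*a^2/b^2))
    (hpos : scal > 0) :
    ∀ n k : ℕ, k ≤ n → diracG a b c (n+2) (k+1) > diracG a b c n k := by
  intro n k _
  have hpos' : 0 < 4*(a^2 + b^2 + c^2) - 2*(a^2*b^2/c^2 + b^2*c^2/a^2 + c^2*a^2/b^2) := by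
    rw [← hscal]; exact hpos
  have hkey := dirac_key a b c ha hb hc hpos' (n : ℝ) (Nat.cast_nonneg n)
  rw [gt_iff_lt, ← sub_pos]
  have hE : diracG a b c (n+2) (k+1) - diracG a b c n k
      = 4*(n : ℝ)*c^2 + 4*b^2 + 4*c^2 + 2*a*c - 2*a*b^2/c - 2*b^2*c/a := by
    simp only [diracG, diracC]
    push_cast
    field_simp
    ring
  rw [hE]
  exact hkey
end

section
/- Let a, b, c be positive real numbers with a ≥ b ≥ c and scal > 0, where scal := 4(a² + b² + c²) − 2(a²b²/c² + b²c²/a² + c²a²/b²). Then G(0,0) = C², and G(n,n) > C² for every integer n ≥ 1. -/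
theorem dirac_sphere_base_diag (a b c : ℝ) (ha : 0 < a) (hb : 0 < b) (hc : 0 < c)
    (hab : a ≥ b) (hbc : b ≥ c) (scal : ℝ)
    (hscal : scal = 4*(a^2 + b^2 + c^2) - 2*(a^2*b^2/c^2 + b^2*c^2/a^2 + c^2*a^2/b^2))
    (hpos : scal > 0) :
    diracG a b c 0 0 = (diracC a b c)^2 ∧
      ∀ n : ℕ, 1 ≤ n → diracG a b c n n > (diracC a b c)^2 := by
  have hsb : diracC a b c > b := by
    rw [diracC]
    have h1 : a*b/c + b*c/a >= 2*b := by
      rw [ge_iff_le, div_add_div _ _ (ne_of_gt hc) (ne_of_gt ha), le_div_iff₀ (by positivity)]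
      nlinarith [mul_nonneg hb.le (sq_nonneg (a - c))]
    have h2 : c*a/b > 0 := by positivity
    linarith
  constructor
  · simp [diracG, diracC]
  · intro n hn
    have hm : (1 : ℝ) ≤ (n : ℝ) := by exact_mod_cast hn
    rw [diracG]
    set s := diracC a b c with hs
    set m := (n : ℝ) with hmdef
    nlinarith [mul_nonneg (mul_nonneg (sub_nonneg.2 hm) (by linarith : (0:ℝ) ≤ m)) (by nlinarith : (0:ℝ) ≤ a^2 - b^2 + c^2),
      mul_nonneg (by linarith : (0:ℝ) ≤ m) (mul_nonneg (by linarith : (0:ℝ) ≤ s - b) (by linarith : (0:ℝ) ≤ a - b + c)),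
      mul_nonneg (by linarith : (0:ℝ) ≤ m) (mul_nonneg hc.le (by linarith : (0:ℝ) ≤ a - b)),
      mul_nonneg (by linarith : (0:ℝ) ≤ m) (by nlinarith : (0:ℝ) ≤ a^2 - b^2 + c^2),
      mul_pos (by linarith : (0:ℝ) < m) (mul_pos hb hc)]
end

section
/- Let a, b, c be positive real numbers with a ≥ b ≥ c and scal > 0, where scal := 4(a² + b² + c²) − 2(a²b²/c² + b²c²/a² + c²a²/b²). Then G(n,0) > C² for every integer n ≥ 6. -/
/-- The quotient polynomial `P` is positive for `0 < c ≤ b ≤ a`. -/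
lemma dirac_aux_P_pos (a b c : ℝ) (ha : 0 < a) (hb : 0 < b) (hc : 0 < c)
    (hab : a ≥ b) (hbc : b ≥ c) :
    (0:ℝ) < -a^4*c^2 + 4*a^3*b*c^2 + 10*a^2*b^2*c^2 + 4*a*b^3*c^2 - b^4*c^2
      - a^5*c - 2*a^4*b*c + 7*a^3*b^2*c + 7*a^2*b^3*c - 2*a*b^4*c - b^5*c
      + 5*a^5*b + 12*a^4*b^2 + 12*a^3*b^3 - 8*a^2*b^4 - 5*a*b^5 := by
  have hba : 0 ≤ a - b := sub_nonneg.2 hab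
  have hcb : 0 ≤ b - c := sub_nonneg.2 hbc
  have tail : (0:ℝ) < 4*a^5*b+9*a^4*b^2+12*a^3*b^3-8*a^2*b^4-7*a*b^5-2*b^6 := by
    nlinarith [mul_nonneg (mul_nonneg hba hb.le) (pow_pos ha 4).le,
      mul_nonneg (mul_nonneg hba (pow_pos ha 3).le) (pow_pos hb 2).le,
      mul_nonneg (mul_nonneg hba (pow_pos ha 2).le) (pow_pos hb 3).le,
      mul_nonneg (mul_nonneg hba ha.le) (pow_pos hb 4).le,
      mul_nonneg hba (pow_pos hb 5).le, pow_pos hb 6]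
  nlinarith [tail,
    mul_nonneg (mul_nonneg (pow_pos ha 4).le (add_pos hb hc).le) hcb,
    mul_nonneg (mul_nonneg (pow_pos hb 4).le (add_pos hb hc).le) hcb,
    mul_nonneg (pow_pos ha 5).le hcb,
    mul_nonneg (mul_nonneg (pow_pos ha 4).le hb.le) hcb,
    mul_nonneg (mul_nonneg ha.le (pow_pos hb 4).le) hcb,
    mul_nonneg (pow_pos hb 5).le hcb,
    mul_pos (mul_pos (pow_pos ha 3) hb) (pow_pos hc 2),
    mul_pos (mul_pos (pow_pos ha 2) (pow_pos hb 2)) (pow_pos hc 2),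
    mul_pos (mul_pos ha (pow_pos hb 3)) (pow_pos hc 2),
    mul_pos (mul_pos (pow_pos ha 3) (pow_pos hb 2)) hc,
    mul_pos (mul_pos (pow_pos ha 2) (pow_pos hb 3)) hc]

/-- Key polynomial inequality, from `ab < c(a+b)`. -/
lemma dirac_aux_key (a b c : ℝ) (ha : 0 < a) (hb : 0 < b) (hc : 0 < c)
    (hab : a ≥ b) (hbc : b ≥ c) (he : a*b < c*(a+b)) :
    (a^2*b^2+b^2*c^2+c^2*a^2)*(a+b+c) < 2*a*b*c*(3*(a^2-b^2+c^2)+(a+b)*(b+c)) := by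
  have hP := dirac_aux_P_pos a b c ha hb hc hab hbc
  have hR : (0:ℝ) ≤ 2*a^2*b^2*(a-b)*(2*a^3+6*a^2*b+9*a*b^2+3*b^3) := by
    have h1 : (0:ℝ) ≤ a - b := sub_nonneg.2 hab
    positivity
  have hid : (a+b)^3 * (2*a*b*c*(3*(a^2-b^2+c^2)+(a+b)*(b+c))
        - (a^2*b^2+b^2*c^2+c^2*a^2)*(a+b+c))
      = (c*(a+b)-a*b) * (-a^4*c^2 + 4*a^3*b*c^2 + 10*a^2*b^2*c^2 + 4*a*b^3*c^2 - b^4*c^2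
          - a^5*c - 2*a^4*b*c + 7*a^3*b^2*c + 7*a^2*b^3*c - 2*a*b^4*c - b^5*c
          + 5*a^5*b + 12*a^4*b^2 + 12*a^3*b^3 - 8*a^2*b^4 - 5*a*b^5)
        + 2*a^2*b^2*(a-b)*(2*a^3+6*a^2*b+9*a*b^2+3*b^3) := by ring
  have h3 : (0:ℝ) < (a+b)^3 := by positivity
  nlinarith [mul_pos (sub_pos.2 he) hP, hid, hR, h3,
    mul_pos h3 (sub_pos.2 he)]

theorem dirac_sphere_base_col0 (a b c : ℝ) (ha : 0 < a) (hb : 0 < b) (hc : 0 < c)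
    (hab : a ≥ b) (hbc : b ≥ c) (scal : ℝ)
    (hscal : scal = 4*(a^2 + b^2 + c^2) - 2*(a^2*b^2/c^2 + b^2*c^2/a^2 + c^2*a^2/b^2))
    (hpos : scal > 0) :
    ∀ n : ℕ, 6 ≤ n → diracG a b c n 0 > (diracC a b c)^2 := by
  -- polynomial form of the hypothesis
  have hQ : (a^2*b^2+b^2*c^2+c^2*a^2)^2 < 4*a^2*b^2*c^2*(a^2+b^2+c^2) := by
    have h0 : 0 < scal * (a^2*b^2*c^2/2) := by
      apply mul_pos hpos; positivity
    have heq : scal * (a^2*b^2*c^2/2) =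
        4*a^2*b^2*c^2*(a^2+b^2+c^2) - (a^2*b^2+b^2*c^2+c^2*a^2)^2 := by
      rw [hscal]; field_simp; ring
    rw [heq] at h0; linarith
  -- hence ab < c(a+b)
  have he : a*b < c*(a+b) := by
    by_contra hcon
    push_neg at hcon
    have hf1 : (0:ℝ) < c*(a+b)+a*b := by positivity
    have hf2 : (0:ℝ) < a*b - c*(a-b) := by nlinarith [mul_nonneg ha.le (sub_nonneg.2 hbc)]
    have hf3 : (0:ℝ) < a*b + c*(a-b) := by nlinarith [mul_nonneg hc.le (sub_nonneg.2 hab)]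
    have hfac : 4*a^2*b^2*c^2*(a^2+b^2+c^2) - (a^2*b^2+b^2*c^2+c^2*a^2)^2
        = (c*(a+b)-a*b) * ((c*(a+b)+a*b) * ((a*b - c*(a-b)) * (a*b + c*(a-b)))) := by ring
    nlinarith [mul_nonneg (sub_nonneg.2 hcon) (mul_pos hf1 (mul_pos hf2 hf3)).le]
  -- key inequality in terms of C
  have habc : (0:ℝ) < a*b*c := by positivity
  have hCval : diracC a b c * (a*b*c) * 2 = a^2*b^2+b^2*c^2+c^2*a^2 := by
    unfold diracC; field_simp
  have hkey : 2 * diracC a b c * (a+b+c) < 6*(a^2-b^2+c^2) + 2*(a+b)*(b+c) := by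
    have h1 := dirac_aux_key a b c ha hb hc hab hbc he
    rw [← hCval] at h1
    have h2 : (2 * diracC a b c * (a+b+c)) * (a*b*c)
        < (6*(a^2-b^2+c^2) + 2*(a+b)*(b+c)) * (a*b*c) := by nlinarith [h1]
    exact lt_of_mul_lt_mul_right h2 habc.le
  have hA : (0:ℝ) < a^2 - b^2 + c^2 := by nlinarith [sq_nonneg c]
  intro n hn
  have hn6 : (6:ℝ) ≤ (n:ℝ) := by exact_mod_cast hn
  have hnpos : (0:ℝ) < (n:ℝ) := by linarith
  have hinner : 0 < (n:ℝ)*(a^2-b^2+c^2) + 2*(a+b)*(b+c) - 2*diracC a b c*(a+b+c) := by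
    nlinarith [mul_le_mul_of_nonneg_right hn6 hA.le]
  have hG : diracG a b c n 0 - (diracC a b c)^2
      = (n:ℝ) * ((n:ℝ)*(a^2-b^2+c^2) + 2*(a+b)*(b+c) - 2*diracC a b c*(a+b+c)) := by
    unfold diracG
    push_cast
    ring
  have := mul_pos hnpos hinner
  linarith [hG ▸ this]
end

section
/- Let a, b, c be positive real numbers with a ≥ b ≥ c and scal > 0, where scal := 4(a² + b² + c²) − 2(a²b²/c² + b²c²/a² + c²a²/b²). Then G(n,1) > C² for every integer n ≥ 4. -/
set_option maxHeartbeats 1000000 in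
private lemma dirac_aux_h1 (a b c q r C : ℝ) (ha : 0 < a) (hb : 0 < b) (hc : 0 < c)
    (hab : a ≥ b) (hbc : b ≥ c) (hq : 0 < q) (hr : 0 < r)
    (hqr : q * r = c^2) (hqc : q ≤ c) (hra : r ≤ a)
    (hbq : b < q + c) (har : a < r + c)
    (hCa : a < C) (hCU : C < q + r + c) (hC2 : C^2 < a^2+b^2+c^2) :
    0 < 4*a^2-2*b^2+8*c^2+2*a*b+2*a*c+2*b*c-2*C*(a+b+c) := by
  nlinarith [sq_nonneg (C-a), sq_nonneg (C-a-c), mul_pos hq hr, mul_pos hc hq,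
    mul_nonneg (sub_nonneg.2 hqc) (sub_nonneg.2 hra), sq_nonneg (a-b), sq_nonneg (b-c),
    mul_pos (sub_pos.2 hCa) (sub_pos.2 hCU), mul_pos hb hc,
    mul_nonneg (sub_nonneg.2 hqc) hb.le, mul_nonneg (sub_nonneg.2 hra) hc.le]

set_option maxHeartbeats 1000000 in
private lemma dirac_aux_h2 (a b c q r C : ℝ) (hb : 0 < b) (hc : 0 < c)
    (hab : a ≥ b) (hbc : b ≥ c) (hq : 0 < q) (hr : 0 < r)
    (hqr : q * r = c^2) (hqc : q ≤ c) (hra : r ≤ a)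
    (hbq : b < q + c) (har : a < r + c)
    (hCa : a < C) (hCU : C < q + r + c) (hC2 : C^2 < a^2+b^2+c^2) :
    0 < 4*a^2+4*b^2+16*c^2+4*a*b+8*a*c+4*b*c-4*C*(a+2*b+c) := by
  nlinarith [mul_pos (sub_pos.2 hCa) (sub_pos.2 hCU), sq_nonneg (C-a-c),
    mul_nonneg (sub_nonneg.2 hqc) (sub_nonneg.2 hra),
    mul_pos (sub_pos.2 hbq) (sub_pos.2 har),
    mul_nonneg (sub_nonneg.2 hqc) (sub_pos.2 har).le,
    mul_nonneg (sub_nonneg.2 hra) (sub_pos.2 hbq).le,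
    sq_nonneg (a-b), sq_nonneg (b-c), mul_pos hb hc, mul_pos hc hq, mul_pos hq hr]

set_option maxHeartbeats 1000000 in
private lemma dirac_aux_facts (a b c p q r C : ℝ) (ha : 0 < a) (hb : 0 < b) (hc : 0 < c)
    (hab : a ≥ b) (hbc : b ≥ c) (hp : 0 < p) (hq : 0 < q) (hr : 0 < r)
    (hpq : p*q = b^2) (hpr : p*r = a^2) (hqr : q*r = c^2)
    (h2C : 2*C = p + q + r)
    (hsum : p^2 + q^2 + r^2 < 2*(a^2+b^2+c^2)) :
    C < q + r + c ∧ a < C ∧ C^2 < a^2+b^2+c^2 ∧ b < q + c ∧ a < r + c := by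
  have hkey : (p - q - r)^2 < 4*c^2 := by nlinarith [hpq, hpr, hqr, hsum]
  have hpU : p - q - r < 2*c := by nlinarith [hkey, hc, sq_nonneg (p - q - r - 2*c)]
  refine ⟨by linarith, ?_, ?_, ?_, ?_⟩
  · nlinarith [sq_nonneg (p - r), hpr, hq, hp, hr, h2C]
  · nlinarith [h2C, hpq, hpr, hqr, hsum]
  · have hb2 : b^2 < (q+c)^2 := by nlinarith [hpq, hqr, hpU, hq]
    nlinarith [hb2, hb, hq, hc]
  · have ha2 : a^2 < (r+c)^2 := by nlinarith [hpr, hqr, hpU, hr]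
    nlinarith [ha2, ha, hr, hc]

set_option maxHeartbeats 1000000 in
theorem dirac_sphere_base_col1 (a b c : ℝ) (ha : 0 < a) (hb : 0 < b) (hc : 0 < c)
    (hab : a ≥ b) (hbc : b ≥ c) (scal : ℝ)
    (hscal : scal = 4*(a^2 + b^2 + c^2) - 2*(a^2*b^2/c^2 + b^2*c^2/a^2 + c^2*a^2/b^2))
    (hpos : scal > 0) :
    ∀ n : ℕ, 4 ≤ n → diracG a b c n 1 > (diracC a b c)^2 := by
  intro n hn
  have hx : (4:ℝ) ≤ (n:ℝ) := by exact_mod_cast hn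
  set x : ℝ := (n:ℝ) with hxdef
  set C : ℝ := diracC a b c with hCdef
  set p : ℝ := a*b/c with hpdef
  set q : ℝ := b*c/a with hqdef
  set r : ℝ := c*a/b with hrdef
  have hp : 0 < p := by rw [hpdef]; positivity
  have hq : 0 < q := by rw [hqdef]; positivity
  have hr : 0 < r := by rw [hrdef]; positivity
  have hpq : p*q = b^2 := by rw [hpdef, hqdef]; field_simp
  have hpr : p*r = a^2 := by rw [hpdef, hrdef]; field_simp
  have hqr : q*r = c^2 := by rw [hqdef, hrdef]; field_simp
  have h2C : 2*C = p + q + r := by rw [hCdef, hpdef, hqdef, hrdef]; unfold diracC; ring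
  have hsum : p^2 + q^2 + r^2 < 2*(a^2+b^2+c^2) := by
    have hp2 : p^2 = a^2*b^2/c^2 := by rw [hpdef]; field_simp
    have hq2 : q^2 = b^2*c^2/a^2 := by rw [hqdef]; field_simp
    have hr2 : r^2 = c^2*a^2/b^2 := by rw [hrdef]; field_simp
    rw [hp2, hq2, hr2]; rw [hscal] at hpos; linarith
  have hqc : q ≤ c := by rw [hqdef, div_le_iff₀ ha]; nlinarith
  have hra : r ≤ a := by rw [hrdef, div_le_iff₀ hb]; nlinarith
  obtain ⟨hCU, hCa, hC2, hbq, har⟩ :=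
    dirac_aux_facts a b c p q r C ha hb hc hab hbc hp hq hr hpq hpr hqr h2C hsum
  have h1 := dirac_aux_h1 a b c q r C ha hb hc hab hbc hq hr hqr hqc hra hbq har hCa hCU hC2
  have h2 := dirac_aux_h2 a b c q r C hb hc hab hbc hq hr hqr hqc hra hbq har hCa hCU hC2
  have hA : 0 < a^2 - b^2 + c^2 := by nlinarith
  have hexp : diracG a b c n 1 - C^2 =
      (a^2-b^2+c^2)*(x-4)^2
      + (4*a^2-2*b^2+8*c^2+2*a*b+2*a*c+2*b*c-2*C*(a+b+c))*(x-4)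
      + (4*a^2+4*b^2+16*c^2+4*a*b+8*a*c+4*b*c-4*C*(a+2*b+c)) := by
    simp only [diracG, ← hCdef, ← hxdef]
    push_cast
    ring
  have t1 : 0 ≤ (a^2-b^2+c^2)*(x-4)^2 := by positivity
  have t2 : 0 ≤ (4*a^2-2*b^2+8*c^2+2*a*b+2*a*c+2*b*c-2*C*(a+b+c))*(x-4) :=
    mul_nonneg h1.le (by linarith)
  linarith [hexp, t1, t2, h2]
end

section
/- Let a, b, c be positive real numbers with a ≥ b ≥ c and scal > 0, where scal := 4(a² + b² + c²) − 2(a²b²/c² + b²c²/a² + c²a²/b²). Then G(1,0) = μ² and G(5,0) > μ², where μ := a + b + c − C. -/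
theorem dirac_sphere_base_mu (a b c : ℝ) (ha : 0 < a) (hb : 0 < b) (hc : 0 < c)
    (hab : a ≥ b) (hbc : b ≥ c) (μ scal : ℝ)
    (hμ : μ = a + b + c - diracC a b c)
    (hscal : scal = 4*(a^2 + b^2 + c^2) - 2*(a^2*b^2/c^2 + b^2*c^2/a^2 + c^2*a^2/b^2))
    (hpos : scal > 0) :
    diracG a b c 1 0 = μ^2 ∧ diracG a b c 5 0 > μ^2 := by
  have ha' := ha.ne'
  have hb' := hb.ne'
  have hc' := hc.ne'
  have habc : (0:ℝ) < a^2*b^2*c^2 := by positivity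
  constructor
  · simp only [diracG, diracC, hμ]
    push_cast
    field_simp
    ring
  · -- Step 1: from scal > 0 deduce b*c + c*a - a*b > 0
    have hfact : scal * (a^2*b^2*c^2) =
        2*(a*b + b*c + c*a)*(a*b + c*a - b*c)*(a*b + b*c - c*a)*(b*c + c*a - a*b) := by
      rw [hscal]; field_simp; ring
    have h1 : 0 < a*b + b*c + c*a := by positivity
    have h2 : 0 < a*b + c*a - b*c := by nlinarith [mul_nonneg hb.le (sub_nonneg.2 (hbc.trans hab)), mul_pos hc ha]
    have h3 : 0 < a*b + b*c - c*a := by nlinarith [mul_nonneg ha.le (sub_nonneg.2 hbc), mul_pos hb hc]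
    have ht : 0 < b*c + c*a - a*b := by
      by_contra h
      push_neg at h
      have hP : 0 < 2*(a*b + b*c + c*a)*(a*b + c*a - b*c)*(a*b + b*c - c*a) := by positivity
      have := mul_nonpos_of_nonneg_of_nonpos hP.le h
      have hsc : 0 < scal * (a^2*b^2*c^2) := mul_pos hpos habc
      rw [hfact] at hsc
      linarith
    -- Step 2: reduce goal to a polynomial inequality
    rw [gt_iff_lt, ← sub_pos, ← mul_pos_iff_of_pos_right habc]
    have key : (diracG a b c 5 0 - μ^2) * (a^2*b^2*c^2) =
        4*(-(a*b^3*c^4) - a*b^4*c^3 + 6*a^2*b^2*c^4 + a^2*b^3*c^3 - 4*a^2*b^4*c^2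
          - a^3*b*c^4 + a^3*b^2*c^3 + a^3*b^3*c^2 - a^3*b^4*c - a^4*b*c^3
          + 6*a^4*b^2*c^2 - a^4*b^3*c) := by
      simp only [diracG, diracC, hμ]
      push_cast
      field_simp
      ring
    rw [key]
    -- Step 3: certificate with u = a-b, v = b-c, t = b*c+c*a-a*b
    have hu : 0 ≤ a - b := sub_nonneg.2 hab
    have hv : 0 ≤ b - c := sub_nonneg.2 hbc
    have hm : 0 < a*b*c := by positivity
    linarith [mul_pos (mul_pos hm ht) (pow_pos hc 3),
      mul_nonneg (mul_pos hm ht).le (mul_nonneg (sq_nonneg (b-c)) hc.le),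
      mul_nonneg (mul_pos hm ht).le (mul_nonneg hv (sq_nonneg c)),
      mul_nonneg (mul_pos hm ht).le (mul_nonneg (mul_nonneg hv hv) hv),
      mul_nonneg (mul_pos hm ht).le (mul_nonneg hu (sq_nonneg (b-c))),
      mul_nonneg (mul_pos hm ht).le (mul_nonneg (sq_nonneg (a-b)) hv),
      mul_nonneg hm.le (mul_nonneg hu (pow_nonneg hc.le 4)),
      mul_nonneg hm.le (mul_nonneg (mul_nonneg hu hv) (pow_nonneg hc.le 3)),
      mul_nonneg hm.le (mul_nonneg (mul_nonneg hu (sq_nonneg (b-c))) (sq_nonneg c)),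
      mul_nonneg hm.le (mul_nonneg (mul_nonneg hu (mul_nonneg (mul_nonneg hv hv) hv)) hc.le),
      mul_nonneg hm.le (mul_nonneg (sq_nonneg (a-b)) (pow_nonneg hc.le 3)),
      mul_nonneg hm.le (mul_nonneg (mul_nonneg (sq_nonneg (a-b)) hv) (sq_nonneg c)),
      mul_nonneg hm.le (mul_nonneg (mul_nonneg (sq_nonneg (a-b)) (sq_nonneg (b-c))) hc.le),
      mul_nonneg hm.le (mul_nonneg (mul_nonneg (mul_nonneg hu hu) hu) (sq_nonneg c)),
      mul_nonneg hm.le (mul_nonneg (mul_nonneg (mul_nonneg (mul_nonneg hu hu) hu) hv) hc.le)]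
end

section
/- Let a, b, c be positive real numbers with a ≥ b ≥ c and scal > 0, where scal := 4(a² + b² + c²) − 2(a²b²/c² + b²c²/a² + c²a²/b²). Then G(n,k) > C² for every even integer n ≥ 6 and every integer 0 ≤ k ≤ n, and G(n,k) > μ² for every odd integer n ≥ 5 and every integer 0 ≤ k ≤ n, where μ := a + b + c − C. -/
set_option maxHeartbeats 1600000

section Aux

variable {a b c C n m : ℝ}

/-- Even case, `m ≤ 0`. -/
lemma dirac_even_neg (hA : 0 ≤ a^2 - b^2) (hac : 0 ≤ a + c) (hc2 : 0 ≤ c^2)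
    (hD : 0 ≤ C - b) (hK0 : 0 < 3*c^2 + a*c - b*(C - b))
    (hn : 6 ≤ n) (hm : m ≤ 0) :
    0 < (a^2 - b^2)*m^2 + c^2*n^2 - 2*(a+c)*(C-b)*m + 2*(a*c - b*(C-b))*n := by
  have t1 : 0 ≤ (a^2 - b^2) * m^2 := mul_nonneg hA (sq_nonneg m)
  have t2 : 0 ≤ ((a+c)*(C-b)) * (-m) := mul_nonneg (mul_nonneg hac hD) (by linarith)
  have t3 : 0 ≤ c^2 * (n*(n-6)) :=
    mul_nonneg hc2 (mul_nonneg (by linarith) (by linarith))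
  have t4 : 0 < n * (3*c^2 + a*c - b*(C - b)) := mul_pos (by linarith) hK0
  nlinarith [t1, t2, t3, t4]

/-- Even case, `m ≥ 2`. -/
lemma dirac_even_pos (hA : 0 ≤ a^2 - b^2) (hc2 : 0 ≤ c^2)
    (hL : 0 ≤ (a+c)*(C-b) - (a^2 - b^2))
    (hK : 0 < a^2 - b^2 + 3*c^2 + a*c - (a+b+c)*(C-b))
    (hn : 6 ≤ n) (hm : 2 ≤ m) (hmn : m ≤ n) :
    0 < (a^2 - b^2)*m^2 + c^2*n^2 - 2*(a+c)*(C-b)*m + 2*(a*c - b*(C-b))*n := by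
  have t1 : 0 ≤ (a^2 - b^2) * (m*(m-2)) :=
    mul_nonneg hA (mul_nonneg (by linarith) (by linarith))
  have t2 : 0 ≤ ((a+c)*(C-b) - (a^2 - b^2)) * (n - m) := mul_nonneg hL (by linarith)
  have t3 : 0 ≤ c^2 * (n*(n-6)) :=
    mul_nonneg hc2 (mul_nonneg (by linarith) (by linarith))
  have t4 : 0 < n * (a^2 - b^2 + 3*c^2 + a*c - (a+b+c)*(C-b)) := mul_pos (by linarith) hK
  nlinarith [t1, t2, t3, t4]

/-- Odd case, `m ≤ -1`. -/
lemma dirac_odd_neg (hA : 0 ≤ a^2 - b^2) (hac : 0 ≤ a + c) (hc2 : 0 ≤ c^2)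
    (hD : 0 ≤ C - b)
    (hL : 0 ≤ (a+c)*(C-b) - (a^2 - b^2))
    (hK : 0 < a^2 - b^2 + 3*c^2 + a*c - (a+b+c)*(C-b))
    (hK0 : 0 < 3*c^2 + a*c - b*(C - b))
    (hn : 5 ≤ n) (hm : m ≤ -1) :
    0 < (a^2 - b^2)*m^2 + c^2*n^2 - 2*(a+c)*(C-b)*m + 2*(a*c - b*(C-b))*n
        - (a+b+c)*((a+b+c) - 2*C) := by
  have t1 : 0 ≤ (a^2 - b^2) * ((-m-1)*(-m+1)) :=
    mul_nonneg hA (mul_nonneg (by linarith) (by linarith))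
  have t2 : 0 ≤ ((a+c)*(C-b)) * (-m-1) := mul_nonneg (mul_nonneg hac hD) (by linarith)
  have t3 : 0 ≤ ((a+c)*(C-b)) := mul_nonneg hac hD
  have t4 : 0 ≤ c^2 * ((n-5)*(n-5)) :=
    mul_nonneg hc2 (mul_nonneg (by linarith) (by linarith))
  have t5 : 0 ≤ (n-5) * (2*(3*c^2 + a*c - b*(C - b)) + 4*c^2) := by
    apply mul_nonneg (by linarith); linarith
  nlinarith [t1, t2, t3, t4, t5, hK, hL, hA]

/-- Odd case, `m ≥ 1`. -/
lemma dirac_odd_pos (hA : 0 ≤ a^2 - b^2) (hc2 : 0 ≤ c^2)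
    (hL : 0 ≤ (a+c)*(C-b) - (a^2 - b^2))
    (hK : 0 < a^2 - b^2 + 3*c^2 + a*c - (a+b+c)*(C-b))
    (hn : 5 ≤ n) (hm : 1 ≤ m) (hmn : m ≤ n) :
    0 < (a^2 - b^2)*m^2 + c^2*n^2 - 2*(a+c)*(C-b)*m + 2*(a*c - b*(C-b))*n
        - (a+b+c)*((a+b+c) - 2*C) := by
  have t1 : 0 ≤ (a^2 - b^2) * ((m-1)*(m-1)) := mul_nonneg hA (mul_nonneg (by linarith) (by linarith))
  have t2 : 0 ≤ ((a+c)*(C-b) - (a^2 - b^2)) * (n - m) := mul_nonneg hL (by linarith)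
  have t3 : 0 ≤ c^2 * ((n-5)*(n-5)) :=
    mul_nonneg hc2 (mul_nonneg (by linarith) (by linarith))
  have t4 : 0 ≤ (n-5) * (2*(a^2 - b^2 + 3*c^2 + a*c - (a+b+c)*(C-b)) + 4*c^2) := by
    apply mul_nonneg (by linarith); linarith
  nlinarith [t1, t2, t3, t4, hK]

/-- Positivity of the degree-5 certificate for the key inequality `K`. -/
lemma dirac_certK {T g h c : ℝ} (hT : 0 < T) (hg : 0 ≤ g) (hh : 0 ≤ h) (hc : 0 < c) :
    0 < T^2*(5*c + 10*h + 7*g)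
      + T*(12*h^2*c + 12*h^3 + 18*g*h*c + 28*g*h^2 + 14*g^2*h)
      + 8*g*h^3*c + 8*g*h^4 + 8*g^2*h^2*c + 14*g^2*h^3 + 6*g^3*h^2 := by
  have q1 : 0 < T^2*c := mul_pos (pow_pos hT 2) hc
  have q2 : 0 ≤ T^2*h := mul_nonneg (sq_nonneg T) hh
  have q3 : 0 ≤ T^2*g := mul_nonneg (sq_nonneg T) hg
  have q4 : 0 ≤ T*(h^2*c) := mul_nonneg hT.le (mul_nonneg (sq_nonneg h) hc.le)
  have q5 : 0 ≤ T*(h^2*h) := mul_nonneg hT.le (mul_nonneg (sq_nonneg h) hh)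
  have q6 : 0 ≤ T*(g*h*c) := mul_nonneg hT.le (mul_nonneg (mul_nonneg hg hh) hc.le)
  have q7 : 0 ≤ T*(g*h*h) := mul_nonneg hT.le (mul_nonneg (mul_nonneg hg hh) hh)
  have q8 : 0 ≤ T*(g*g*h) := mul_nonneg hT.le (mul_nonneg (mul_nonneg hg hg) hh)
  have q9 : 0 ≤ g*h*h*h*c := mul_nonneg (mul_nonneg (mul_nonneg (mul_nonneg hg hh) hh) hh) hc.le
  have q10 : 0 ≤ g*h*h*h*h := mul_nonneg (mul_nonneg (mul_nonneg (mul_nonneg hg hh) hh) hh) hh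
  have q11 : 0 ≤ g*g*h*h*c := mul_nonneg (mul_nonneg (mul_nonneg (mul_nonneg hg hg) hh) hh) hc.le
  have q12 : 0 ≤ g*g*h*h*h := mul_nonneg (mul_nonneg (mul_nonneg (mul_nonneg hg hg) hh) hh) hh
  have q13 : 0 ≤ g*g*g*h*h := mul_nonneg (mul_nonneg (mul_nonneg (mul_nonneg hg hg) hg) hh) hh
  nlinarith [q1, q2, q3, q4, q5, q6, q7, q8, q9, q10, q11, q12, q13]

/-- Positivity of the degree-5 certificate for the key inequality `K0`. -/
lemma dirac_certK0 {T g h c : ℝ} (hT : 0 < T) (hg : 0 ≤ g) (hh : 0 ≤ h) (hc : 0 < c) :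
    0 < T^2*(7*c + 15*h + 8*g)
      + T*(22*h^2*c + 28*h^3 + 22*g*h*c + 42*g*h^2 + 14*g^2*h)
      + 12*h^4*c + 12*h^5 + 24*g*h^3*c + 30*g*h^4
      + 12*g^2*h^2*c + 24*g^2*h^3 + 6*g^3*h^2 := by
  have q1 : 0 < T^2*c := mul_pos (pow_pos hT 2) hc
  have q2 : 0 ≤ T^2*h := mul_nonneg (sq_nonneg T) hh
  have q3 : 0 ≤ T^2*g := mul_nonneg (sq_nonneg T) hg
  have q4 : 0 ≤ T*(h^2*c) := mul_nonneg hT.le (mul_nonneg (sq_nonneg h) hc.le)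
  have q5 : 0 ≤ T*(h^2*h) := mul_nonneg hT.le (mul_nonneg (sq_nonneg h) hh)
  have q6 : 0 ≤ T*(g*h*c) := mul_nonneg hT.le (mul_nonneg (mul_nonneg hg hh) hc.le)
  have q7 : 0 ≤ T*(g*h*h) := mul_nonneg hT.le (mul_nonneg (mul_nonneg hg hh) hh)
  have q8 : 0 ≤ T*(g*g*h) := mul_nonneg hT.le (mul_nonneg (mul_nonneg hg hg) hh)
  have q9 : 0 ≤ g*h*h*h*c := mul_nonneg (mul_nonneg (mul_nonneg (mul_nonneg hg hh) hh) hh) hc.le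
  have q10 : 0 ≤ g*h*h*h*h := mul_nonneg (mul_nonneg (mul_nonneg (mul_nonneg hg hh) hh) hh) hh
  have q11 : 0 ≤ g*g*h*h*c := mul_nonneg (mul_nonneg (mul_nonneg (mul_nonneg hg hg) hh) hh) hc.le
  have q12 : 0 ≤ g*g*h*h*h := mul_nonneg (mul_nonneg (mul_nonneg (mul_nonneg hg hg) hh) hh) hh
  have q13 : 0 ≤ g*g*g*h*h := mul_nonneg (mul_nonneg (mul_nonneg (mul_nonneg hg hg) hg) hh) hh
  have q14 : 0 ≤ h*h*h*h*c := mul_nonneg (mul_nonneg (mul_nonneg (mul_nonneg hh hh) hh) hh) hc.le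
  have q15 : 0 ≤ h*h*h*h*h := mul_nonneg (mul_nonneg (mul_nonneg (mul_nonneg hh hh) hh) hh) hh
  nlinarith [q1, q2, q3, q4, q5, q6, q7, q8, q9, q10, q11, q12, q13, q14, q15]

end Aux

theorem dirac_sphere_gershgorin_estimates (a b c : ℝ) (ha : 0 < a) (hb : 0 < b) (hc : 0 < c)
    (hab : a ≥ b) (hbc : b ≥ c) (μ scal : ℝ)
    (hμ : μ = a + b + c - diracC a b c)
    (hscal : scal = 4*(a^2 + b^2 + c^2) - 2*(a^2*b^2/c^2 + b^2*c^2/a^2 + c^2*a^2/b^2))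
    (hpos : scal > 0) :
    (∀ n k : ℕ, 6 ≤ n → Even n → k ≤ n → diracG a b c n k > (diracC a b c)^2) ∧
    (∀ n k : ℕ, 5 ≤ n → Odd n → k ≤ n → diracG a b c n k > μ^2) := by
  have ha' := ha.ne'
  have hb' := hb.ne'
  have hc' := hc.ne'
  set C := diracC a b c with hCdef
  have habc : 0 < a*b*c := by positivity
  have hC : 2*(a*b*c)*C = a^2*b^2 + b^2*c^2 + c^2*a^2 := by
    rw [hCdef]; unfold diracC; field_simp
  -- scal > 0 gives the triangle condition bc + ca - ab > 0
  have hkey : scal * (a*b*c)^2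
      = 2*(a*b + b*c + c*a)*(b*c + c*a - a*b)*(a*b + c*a - b*c)*(a*b + b*c - c*a) := by
    rw [hscal]; field_simp; ring
  have hf1 : 0 < a*b + b*c + c*a := by positivity
  have hf3 : 0 < a*b + c*a - b*c := by nlinarith [mul_nonneg hb.le (sub_nonneg.2 (hbc.trans hab)), mul_pos hc ha]
  have hf4 : 0 < a*b + b*c - c*a := by nlinarith [mul_nonneg ha.le (sub_nonneg.2 hbc), mul_pos hb hc]
  have hT : 0 < b*c + c*a - a*b := by
    by_contra h
    push_neg at h
    have h1 : 0 < scal * (a*b*c)^2 := mul_pos hpos (by positivity)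
    nlinarith [mul_pos (mul_pos hf1 hf3) hf4, h1, hkey]
  have hA : 0 ≤ a^2 - b^2 := by nlinarith
  have hac : 0 ≤ a + c := by linarith
  have hc2 : 0 ≤ c^2 := sq_nonneg c
  -- D = C - b ≥ 0
  have hD : 0 ≤ C - b := by
    have hid : 2*(a*b*c)*(C - b) = a^2*(b-c)^2 + b^2*c^2 + 2*(a*b*c)*(a-b) := by
      linear_combination hC
    nlinarith [sq_nonneg (a*(b-c)), mul_pos (mul_pos hb hb) (mul_pos hc hc),
      mul_nonneg habc.le (sub_nonneg.2 hab), habc, hid]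
  -- L = (a+c)(C-b) - (a² - b²) ≥ 0
  have hL : 0 ≤ (a+c)*(C-b) - (a^2 - b^2) := by
    have hid : 2*(a*b*c)*((a+c)*(C-b) - (a^2 - b^2))
        = (a+c)*(a*(b-c) - b*c)^2 + 2*(a*b*c)*(b-c)*(b+c) := by
      linear_combination (a+c)*hC
    nlinarith [mul_nonneg hac (sq_nonneg (a*(b-c) - b*c)),
      mul_nonneg (mul_nonneg habc.le (sub_nonneg.2 hbc)) (by linarith : (0:ℝ) ≤ b + c),
      habc, hid]
  -- key inequality K > 0
  have hg : 0 ≤ a - b := by linarith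
  have hh : 0 ≤ b - c := by linarith
  have hK : 0 < a^2 - b^2 + 3*c^2 + a*c - (a+b+c)*(C-b) := by
    have hid : 2*(a*b*c)*(a^2 - b^2 + 3*c^2 + a*c - (a+b+c)*(C-b))
        = (b*c + c*a - a*b)^2*(5*c + 10*(b-c) + 7*(a-b))
          + (b*c + c*a - a*b)*(12*(b-c)^2*c + 12*(b-c)^3 + 18*(a-b)*(b-c)*c
              + 28*(a-b)*(b-c)^2 + 14*(a-b)^2*(b-c))
          + 8*(a-b)*(b-c)^3*c + 8*(a-b)*(b-c)^4 + 8*(a-b)^2*(b-c)^2*c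
          + 14*(a-b)^2*(b-c)^3 + 6*(a-b)^3*(b-c)^2 := by
      linear_combination (-(a+b+c))*hC
    have hcert := dirac_certK hT hg hh hc
    have h2 : 0 < 2*(a*b*c)*(a^2 - b^2 + 3*c^2 + a*c - (a+b+c)*(C-b)) := by
      rw [hid]; linarith [hcert]
    nlinarith [h2, habc]
  have hK0 : 0 < 3*c^2 + a*c - b*(C - b) := by
    have hid : 2*(a*b*c)*(3*c^2 + a*c - b*(C-b))
        = (b*c + c*a - a*b)^2*(7*c + 15*(b-c) + 8*(a-b))
          + (b*c + c*a - a*b)*(22*(b-c)^2*c + 28*(b-c)^3 + 22*(a-b)*(b-c)*c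
              + 42*(a-b)*(b-c)^2 + 14*(a-b)^2*(b-c))
          + 12*(b-c)^4*c + 12*(b-c)^5 + 24*(a-b)*(b-c)^3*c + 30*(a-b)*(b-c)^4
          + 12*(a-b)^2*(b-c)^2*c + 24*(a-b)^2*(b-c)^3 + 6*(a-b)^3*(b-c)^2 := by
      linear_combination (-b)*hC
    have hcert := dirac_certK0 hT hg hh hc
    have h2 : 0 < 2*(a*b*c)*(3*c^2 + a*c - b*(C-b)) := by
      rw [hid]; linarith [hcert]
    nlinarith [h2, habc]
  constructor
  · -- even case
    rintro n k hn6 ⟨t, rfl⟩ hkn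
    have hexp : diracG a b c (t+t) k - C^2
        = (a^2 - b^2)*((((t:ℝ)+t) - 2*k))^2 + c^2*((t:ℝ)+t)^2
          - 2*(a+c)*(C-b)*(((t:ℝ)+t) - 2*k) + 2*(a*c - b*(C-b))*((t:ℝ)+t) := by
      unfold diracG
      rw [← hCdef]
      push_cast
      ring
    have hn6' : (6:ℝ) ≤ (t:ℝ)+t := by exact_mod_cast hn6
    have hkn' : (k:ℝ) ≤ (t:ℝ)+t := by exact_mod_cast hkn
    rcases le_or_gt t k with hk | hk
    · have hk' : (t:ℝ) ≤ k := by exact_mod_cast hk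
      have := dirac_even_neg (C := C) (n := (t:ℝ)+t) (m := ((t:ℝ)+t) - 2*k)
        hA hac hc2 hD hK0 hn6' (by linarith)
      linarith [hexp, this]
    · have hk' : (k:ℝ) + 1 ≤ t := by exact_mod_cast hk
      have := dirac_even_pos (C := C) (n := (t:ℝ)+t) (m := ((t:ℝ)+t) - 2*k)
        hA hc2 hL hK hn6' (by linarith) (by linarith)
      linarith [hexp, this]
  · -- odd case
    rintro n k hn5 ⟨t, rfl⟩ hkn
    have hexp : diracG a b c (2*t+1) k - μ^2
        = (a^2 - b^2)*(((2*(t:ℝ)+1) - 2*k))^2 + c^2*(2*(t:ℝ)+1)^2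
          - 2*(a+c)*(C-b)*((2*(t:ℝ)+1) - 2*k) + 2*(a*c - b*(C-b))*(2*(t:ℝ)+1)
          - (a+b+c)*((a+b+c) - 2*C) := by
      rw [hμ]
      unfold diracG
      rw [← hCdef]
      push_cast
      ring
    have hn5' : (5:ℝ) ≤ 2*(t:ℝ)+1 := by exact_mod_cast hn5
    have hkn' : (k:ℝ) ≤ 2*(t:ℝ)+1 := by exact_mod_cast hkn
    rcases le_or_gt k t with hk | hk
    · have hk' : (k:ℝ) ≤ t := by exact_mod_cast hk
      have := dirac_odd_pos (C := C) (n := 2*(t:ℝ)+1) (m := (2*(t:ℝ)+1) - 2*k)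
        hA hc2 hL hK hn5' (by linarith) (by linarith)
      linarith [hexp, this]
    · have hk' : (t:ℝ) + 1 ≤ k := by exact_mod_cast hk
      have := dirac_odd_neg (C := C) (n := 2*(t:ℝ)+1) (m := (2*(t:ℝ)+1) - 2*k)
        hA hac hc2 hD hL hK hK0 hn5' (by linarith)
      linarith [hexp, this]
end

section
/- For positive real numbers a, b, c define C(a,b,c) := (1/2)(ab/c + bc/a + ca/b), μ(a,b,c) := a + b + c − C(a,b,c), and scal(a,b,c) := 4(a² + b² + c²) − 2(a²b²/c² + b²c²/a² + c²a²/b²). Let a, b, c, a', b', c' be positive real numbers with scal(a,b,c) > 0 and scal(a',b',c') > 0. If abc = a'b'c', scal(a,b,c) = scal(a',b',c'), and μ(a,b,c) = μ(a',b',c'), then the multiset {a, b, c} equals the multiset {a', b', c'}, i.e. (a',b',c') is a permutation of (a,b,c). -/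
/-- `μ = a + b + c - C`. -/
noncomputable def diracMu (a b c : ℝ) : ℝ := a + b + c - diracC a b c

/-- The scalar curvature of the metric `g_{abc}`. -/
noncomputable def diracScal (a b c : ℝ) : ℝ :=
  4*(a^2 + b^2 + c^2) - 2*(a^2*b^2/c^2 + b^2*c^2/a^2 + c^2*a^2/b^2)

/-!
All three invariants are functions of the elementary symmetric polynomials `e₁, e₂, e₃` of
`a, b, c`: with `u = e₂² / e₃` one has `μ = 2 e₁ - u / 2` and `scal = 4 μ u - 16 e₂`.
Once `e₃` and `μ` agree, `scal` is the quadratic `w ↦ (4μ/e₃) w² - 16 w` evaluated at `w = e₂`,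
and a positive value of such a quadratic (which vanishes at `0`) is taken at only one
positive argument. Hence `e₂` agrees, then `e₁` agrees through `μ`, and Vieta's formulas
give the multiset of roots.
-/

open Polynomial in
theorem Multiset.triple_eq_of_esymm_eq {R : Type*} [CommRing R] [IsDomain R]
    {a b c a' b' c' : R}
    (h₁ : a + b + c = a' + b' + c')
    (h₂ : a*b + b*c + c*a = a'*b' + b'*c' + c'*a')
    (h₃ : a*b*c = a'*b'*c') :
    ({a, b, c} : Multiset R) = {a', b', c'} := by
  have vieta : ∀ x y z : R, (X - C x) * ((X - C y) * (X - C z)) =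
      X^3 - C (x + y + z) * X^2 + C (x*y + y*z + z*x) * X - C (x*y*z) := by
    intro x y z
    simp only [C_add, C_mul]
    ring
  have roots_eq : ∀ x y z : R,
      ({x, y, z} : Multiset R) = ((X - C x) * ((X - C y) * (X - C z))).roots := by
    intro x y z
    simpa using (roots_multiset_prod_X_sub_C ({x, y, z} : Multiset R)).symm
  rw [roots_eq, roots_eq, vieta, vieta, h₁, h₂, h₃]

theorem eq_of_quadratic_eq_of_pos {K : Type*} [Field K] [LinearOrder K] [IsStrictOrderedRing K]
    {α β w w' : K} (hβ : 0 ≤ β) (hw : 0 < w) (hw' : 0 ≤ w')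
    (hpos : 0 < α*w^2 - β*w) (heq : α*w^2 - β*w = α*w'^2 - β*w') :
    w = w' := by
  have hαw : β < α*w := by nlinarith
  have hα : 0 < α := by nlinarith
  have hfactor : (w - w') * (α*(w + w') - β) = 0 := by linear_combination heq
  have hne : α*(w + w') - β ≠ 0 := by nlinarith [mul_nonneg hα.le hw']
  exact sub_eq_zero.mp ((mul_eq_zero.mp hfactor).resolve_right hne)

section symmetric

variable {a b c : ℝ}

theorem diracMu_eq_esymm (ha : a ≠ 0) (hb : b ≠ 0) (hc : c ≠ 0) :
    diracMu a b c = 2*(a + b + c) - (a*b + b*c + c*a)^2 / (2*(a*b*c)) := by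
  unfold diracMu diracC
  field_simp
  ring

theorem diracScal_eq_esymm (ha : a ≠ 0) (hb : b ≠ 0) (hc : c ≠ 0) :
    diracScal a b c =
      4 * diracMu a b c / (a*b*c) * (a*b + b*c + c*a)^2 - 16*(a*b + b*c + c*a) := by
  rw [diracMu_eq_esymm ha hb hc]
  unfold diracScal
  field_simp
  ring

end symmetric

theorem dirac_sphere_spectral_rigidity_pos_scal_S3_general (a b c a' b' c' : ℝ)
    (ha : 0 < a) (hb : 0 < b) (hc : 0 < c)
    (ha' : 0 < a') (hb' : 0 < b') (hc' : 0 < c')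
    (hscal : diracScal a b c > 0)
    (hvol : a*b*c = a'*b'*c')
    (hs : diracScal a b c = diracScal a' b' c')
    (hm : diracMu a b c = diracMu a' b' c') :
    ({a, b, c} : Multiset ℝ) = ({a', b', c'} : Multiset ℝ) := by
  rw [diracScal_eq_esymm ha.ne' hb.ne' hc.ne'] at hs hscal
  rw [diracScal_eq_esymm ha'.ne' hb'.ne' hc'.ne', ← hm, ← hvol] at hs
  have he₂ : a*b + b*c + c*a = a'*b' + b'*c' + c'*a' :=
    eq_of_quadratic_eq_of_pos (by norm_num) (by positivity) (by positivity) hscal hs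
  have he₁ : a + b + c = a' + b' + c' := by
    rw [diracMu_eq_esymm ha.ne' hb.ne' hc.ne', diracMu_eq_esymm ha'.ne' hb'.ne' hc'.ne',
      ← hvol, ← he₂] at hm
    linarith
  exact Multiset.triple_eq_of_esymm_eq he₁ he₂ hvol

theorem dirac_sphere_spectral_rigidity_pos_scal_S3 (a b c a' b' c' : ℝ)
    (ha : 0 < a) (hb : 0 < b) (hc : 0 < c)
    (ha' : 0 < a') (hb' : 0 < b') (hc' : 0 < c')
    (hscal : diracScal a b c > 0) (hscal' : diracScal a' b' c' > 0)
    (hvol : a*b*c = a'*b'*c')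
    (hs : diracScal a b c = diracScal a' b' c')
    (hm : diracMu a b c = diracMu a' b' c') :
    ({a, b, c} : Multiset ℝ) = ({a', b', c'} : Multiset ℝ) :=
  dirac_sphere_spectral_rigidity_pos_scal_S3_general a b c a' b' c' ha hb hc ha' hb' hc' hscal hvol
    hs hm
end

section
/- For positive real numbers a, b, c define C(a,b,c) := (1/2)(ab/c + bc/a + ca/b) and scal(a,b,c) := 4(a² + b² + c²) − 2(a²b²/c² + b²c²/a² + c²a²/b²). Let a, b, c, a', b', c' be positive real numbers with scal(a,b,c) > 0 and scal(a',b',c') > 0. If abc = a'b'c', scal(a,b,c) = scal(a',b',c'), and C(a,b,c) = C(a',b',c'), then the multiset {a, b, c} equals the multiset {a', b', c'}, i.e. (a',b',c') is a permutation of (a,b,c). -/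
theorem dirac_sphere_spectral_rigidity_pos_scal_SO3 (a b c a' b' c' : ℝ)
    (ha : 0 < a) (hb : 0 < b) (hc : 0 < c)
    (ha' : 0 < a') (hb' : 0 < b') (hc' : 0 < c')
    (hscal : diracScal a b c > 0) (hscal' : diracScal a' b' c' > 0)
    (hvol : a*b*c = a'*b'*c')
    (hs : diracScal a b c = diracScal a' b' c')
    (hC : diracC a b c = diracC a' b' c') :
    ({a, b, c} : Multiset ℝ) = ({a', b', c'} : Multiset ℝ) := by
  have ha0 := ha.ne'
  have hb0 := hb.ne'
  have hc0 := hc.ne'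
  have ha0' := ha'.ne'
  have hb0' := hb'.ne'
  have hc0' := hc'.ne'
  -- e1 equal
  have h1 : a*b/c + b*c/a + c*a/b = a'*b'/c' + b'*c'/a' + c'*a'/b' := by
    unfold diracC at hC; linarith
  -- sum of squares equal
  have hsq : (a*b/c + b*c/a + c*a/b)^2
      = (a^2*b^2/c^2 + b^2*c^2/a^2 + c^2*a^2/b^2) + 2*(a^2+b^2+c^2) := by
    field_simp; ring
  have hsq' : (a'*b'/c' + b'*c'/a' + c'*a'/b')^2
      = (a'^2*b'^2/c'^2 + b'^2*c'^2/a'^2 + c'^2*a'^2/b'^2) + 2*(a'^2+b'^2+c'^2) := by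
    field_simp; ring
  have hS : a^2 + b^2 + c^2 = a'^2 + b'^2 + c'^2 := by
    unfold diracScal at hs
    have h1sq := congrArg (fun t : ℝ => t^2) h1
    linarith [hsq, hsq', h1sq]
  -- sum of pairwise products of squares equal
  have hQ : a^2*b^2 + b^2*c^2 + c^2*a^2 = a'^2*b'^2 + b'^2*c'^2 + c'^2*a'^2 := by
    have e : a^2*b^2 + b^2*c^2 + c^2*a^2 = (a*b*c) * (a*b/c + b*c/a + c*a/b) := by
      field_simp
    have e' : a'^2*b'^2 + b'^2*c'^2 + c'^2*a'^2
        = (a'*b'*c') * (a'*b'/c' + b'*c'/a' + c'*a'/b') := by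
      field_simp
    rw [e, e', hvol, h1]
  have hP : (a*b*c)^2 = (a'*b'*c')^2 := by rw [hvol]
  -- multiset of squares equal via cubic polynomial roots
  have hpoly :
      (({a^2, b^2, c^2} : Multiset ℝ).map fun r => Polynomial.X - Polynomial.C r).prod
      = (({a'^2, b'^2, c'^2} : Multiset ℝ).map fun r => Polynomial.X - Polynomial.C r).prod := by
    apply Polynomial.funext
    intro x
    simp only [Multiset.insert_eq_cons, Multiset.map_cons, Multiset.map_singleton,
      Multiset.prod_cons, Multiset.prod_singleton, Polynomial.eval_mul, Polynomial.eval_sub,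
      Polynomial.eval_X, Polynomial.eval_C]
    linear_combination (-(x^2)) * hS + x * hQ - hP
  have hsqms : ({a^2, b^2, c^2} : Multiset ℝ) = ({a'^2, b'^2, c'^2} : Multiset ℝ) := by
    have := congrArg Polynomial.roots hpoly
    rwa [Polynomial.roots_multiset_prod_X_sub_C, Polynomial.roots_multiset_prod_X_sub_C] at this
  -- take square roots
  have := congrArg (Multiset.map Real.sqrt) hsqms
  simpa [Real.sqrt_sq ha.le, Real.sqrt_sq hb.le, Real.sqrt_sq hc.le,
    Real.sqrt_sq ha'.le, Real.sqrt_sq hb'.le, Real.sqrt_sq hc'.le] using this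
end
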